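/- arXiv:2009.00986 — 4 statements merged into one kernel-verified Lean document; each statement's English description precedes it below -/
import Mathlib

section
/- Let n ≥ 2, 1 ≤ m ≤ n with 2m ≤ n. For every ε > 0 there exist r, s > 0 with r² + s² = 1 such that, setting λ = s/r, μ = -r/s, |A|² = m·λ² + (n-m)·μ², and H = m·λ + (n-m)·μ, one has |A|² - H²/(n-m) - 2m ≤ ε. -/
/-! With `λ = s / r` and `μ = -(r / s)` one has `λ μ = -1`, and this alone turns the pinching
defect `|A|² - H²/(n-m) - 2m` into `m (n - 2m)/(n - m) · λ²`. Every slope `λ > 0` is realised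
by a point `(r, s)` of the unit circle, so letting `λ → 0` (i.e. `r → 1`) makes the defect
as small as we like. -/

open Filter Topology

lemma pinching_defect_eq {a b l μ : ℝ} (ha : a ≠ 0) (hlμ : l * μ = -1) :
    (b * l ^ 2 + a * μ ^ 2) - (b * l + a * μ) ^ 2 / a - 2 * b = b * (a - b) / a * l ^ 2 := by
  field_simp
  linear_combination (-2 * a * b) * hlμ

lemma exists_mul_sq_le_of_pos (c : ℝ) {ε : ℝ} (hε : 0 < ε) : ∃ t : ℝ, 0 < t ∧ c * t ^ 2 ≤ ε := by
  have hlim : Tendsto (fun t : ℝ => c * t ^ 2) (𝓝[>] 0) (𝓝 0) := by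
    have : Tendsto (fun t : ℝ => c * t ^ 2) (𝓝 0) (𝓝 (c * 0 ^ 2)) :=
      (continuous_const.mul (continuous_pow 2)).tendsto 0
    simpa using this.mono_left nhdsWithin_le_nhds
  obtain ⟨t, hlt, ht⟩ :=
    ((hlim.eventually (ge_mem_nhds hε)).and self_mem_nhdsWithin).exists
  exact ⟨t, ht, hlt⟩

lemma exists_unit_circle_div_eq {t : ℝ} (ht : 0 < t) :
    ∃ r s : ℝ, 0 < r ∧ 0 < s ∧ r ^ 2 + s ^ 2 = 1 ∧ s / r = t := by
  set u := √(1 + t ^ 2)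
  have hu : 0 < u := Real.sqrt_pos.2 (by positivity)
  have hu2 : u ^ 2 = 1 + t ^ 2 := Real.sq_sqrt (by positivity)
  refine ⟨1 / u, t / u, by positivity, by positivity, ?_, by field_simp⟩
  rw [div_pow, div_pow, ← add_div, hu2]
  field_simp

theorem stmt1_general (n m : ℕ) (hm : 1 ≤ m) (hmn : 2 * m ≤ n)
    (ε : ℝ) (hε : 0 < ε) :
    ∃ r s : ℝ, 0 < r ∧ 0 < s ∧ r ^ 2 + s ^ 2 = 1 ∧
      (m * (s / r) ^ 2 + (n - m : ℝ) * (-(r / s)) ^ 2)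
        - (m * (s / r) + (n - m : ℝ) * (-(r / s))) ^ 2 / (n - m : ℝ)
        - 2 * m ≤ ε := by
  have hnm : (n - m : ℝ) ≠ 0 := sub_ne_zero.2 (by norm_cast; omega)
  obtain ⟨t, ht, hdefect⟩ := exists_mul_sq_le_of_pos (m * ((n - m) - m) / (n - m)) hε
  obtain ⟨r, s, hr, hs, hrs, rfl⟩ := exists_unit_circle_div_eq ht
  refine ⟨r, s, hr, hs, hrs, ?_⟩
  rwa [pinching_defect_eq hnm (by field_simp)]

/-- Sharpness of the quadratic pinching condition: the hypersurfaces
`S^m(r) × S^{n-m}(s)` of the unit sphere come arbitrarily close to equality. -/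
theorem stmt1 (n m : ℕ) (hn : 2 ≤ n) (hm : 1 ≤ m) (hmn : 2 * m ≤ n)
    (ε : ℝ) (hε : 0 < ε) :
    ∃ r s : ℝ, 0 < r ∧ 0 < s ∧ r ^ 2 + s ^ 2 = 1 ∧
      (m * (s / r) ^ 2 + (n - m : ℝ) * (-(r / s)) ^ 2)
        - (m * (s / r) + (n - m : ℝ) * (-(r / s))) ^ 2 / (n - m : ℝ)
        - 2 * m ≤ ε :=
  stmt1_general n m hm hmn ε hε
end

section
/- Let n ≥ 2 and let T be a totally symmetric 3-tensor on ℝⁿ (i.e. T_{ijk} is invariant under all permutations of its indices). Define its trace vector by (tr T)_i = Σ_j T_{ijj}. Then |T|² ≥ (3/(n+2)) |tr T|², where |T|² = Σ_{i,j,k} T_{ijk}² and |tr T|² = Σ_i (tr T)_i². -/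
/-!
Write `v = tr T` and let `S(v)ᵢⱼₖ = δᵢⱼ vₖ + δⱼₖ vᵢ + δᵢₖ vⱼ`, the symmetric tensor built from `v`.
Pairing `T` with `S(v)` contracts `T` in each pair of slots, so `⟨T, S(v)⟩ = 3|v|²` when `T` is
totally symmetric. Applying the same identity to `S(v)` itself, whose trace is `(n + 2) v`, gives
`|S(v)|² = 3(n + 2)|v|²`. Cauchy–Schwarz `⟨T, S(v)⟩² ≤ |T|² |S(v)|²` is then the claim.
-/

open Finset

namespace Tensor3

variable {ι R : Type*}

def IsTotallySymmetric (T : ι → ι → ι → R) : Prop :=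
  ∀ i j k, T i j k = T j i k ∧ T i j k = T i k j

section CommSemiring

variable [CommSemiring R] [DecidableEq ι]

def symmOfVec (v : ι → R) (i j k : ι) : R :=
  (if i = j then v k else 0) + (if j = k then v i else 0) + (if i = k then v j else 0)

theorem isTotallySymmetric_symmOfVec (v : ι → R) : IsTotallySymmetric (symmOfVec v) := by
  intro i j k
  unfold symmOfVec
  constructor
  · simp only [eq_comm (a := j) (b := i)]; ring
  · simp only [eq_comm (a := k) (b := j)]; ring

variable [Fintype ι]

def trace (T : ι → ι → ι → R) (i : ι) : R :=
  ∑ j, T i j j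

theorem sum_mul_symmOfVec (T : ι → ι → ι → R) (v : ι → R) :
    ∑ i, ∑ j, ∑ k, T i j k * symmOfVec v i j k
      = ∑ i, (∑ j, T j j i) * v i + ∑ i, trace T i * v i + ∑ i, (∑ j, T j i j) * v i := by
  have h₁₂ : ∑ i, ∑ j, ∑ k, T i j k * (if i = j then v k else 0) = ∑ i, (∑ j, T j j i) * v i := by
    simp only [mul_ite, mul_zero, sum_ite_irrel, sum_const_zero, sum_ite_eq, mem_univ, if_true,
      sum_mul]
    exact sum_comm
  have h₂₃ : ∑ i, ∑ j, ∑ k, T i j k * (if j = k then v i else 0) = ∑ i, trace T i * v i := by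
    simp only [mul_ite, mul_zero, sum_ite_eq, mem_univ, if_true, trace, sum_mul]
  have h₁₃ : ∑ i, ∑ j, ∑ k, T i j k * (if i = k then v j else 0) = ∑ i, (∑ j, T j i j) * v i := by
    simp only [mul_ite, mul_zero, sum_ite_eq, mem_univ, if_true, sum_mul]
    exact sum_comm
  simp only [symmOfVec, mul_add, sum_add_distrib, h₁₂, h₂₃, h₁₃]

theorem IsTotallySymmetric.sum_mul_symmOfVec {T : ι → ι → ι → R} (hT : IsTotallySymmetric T)
    (v : ι → R) :
    ∑ i, ∑ j, ∑ k, T i j k * symmOfVec v i j k = 3 * ∑ i, trace T i * v i := by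
  have h₁ : ∀ i j, T j j i = T i j j := fun i j => by rw [(hT j j i).2, (hT j i j).1]
  have h₂ : ∀ i j, T j i j = T i j j := fun i j => (hT j i j).1
  simp only [Tensor3.sum_mul_symmOfVec, h₁, h₂, trace]
  ring

theorem trace_symmOfVec (v : ι → R) (i : ι) :
    trace (symmOfVec v) i = (Fintype.card ι + 2) * v i := by
  simp only [trace, symmOfVec, ↓reduceIte, sum_add_distrib, sum_ite_eq, mem_univ, sum_const,
    card_univ, nsmul_eq_mul]
  ring

theorem sum_symmOfVec_sq (v : ι → R) :
    ∑ i, ∑ j, ∑ k, symmOfVec v i j k ^ 2 = 3 * (Fintype.card ι + 2) * ∑ i, v i ^ 2 := by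
  simp only [sq, (isTotallySymmetric_symmOfVec v).sum_mul_symmOfVec, trace_symmOfVec, mul_sum]
  simp only [mul_assoc]

end CommSemiring

theorem sum_mul_sq_le_sq_mul_sq₃ [Fintype ι] [CommRing R] [LinearOrder R] [IsStrictOrderedRing R]
    (f g : ι → ι → ι → R) :
    (∑ i, ∑ j, ∑ k, f i j k * g i j k) ^ 2
      ≤ (∑ i, ∑ j, ∑ k, f i j k ^ 2) * ∑ i, ∑ j, ∑ k, g i j k ^ 2 := by
  simpa only [Fintype.sum_prod_type] using
    sum_mul_sq_le_sq_mul_sq univ (fun p : ι × ι × ι => f p.1 p.2.1 p.2.2)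
      (fun p : ι × ι × ι => g p.1 p.2.1 p.2.2)

theorem IsTotallySymmetric.sum_trace_sq_le [Fintype ι] [Field R] [LinearOrder R]
    [IsStrictOrderedRing R] {T : ι → ι → ι → R} (hT : IsTotallySymmetric T) :
    3 * ∑ i, trace T i ^ 2 ≤ (Fintype.card ι + 2) * ∑ i, ∑ j, ∑ k, T i j k ^ 2 := by
  classical
  have hcs := sum_mul_sq_le_sq_mul_sq₃ T (symmOfVec (trace T))
  rw [hT.sum_mul_symmOfVec, sum_symmOfVec_sq] at hcs
  simp only [← sq] at hcs
  have hB : 0 ≤ ∑ i, trace T i ^ 2 := sum_nonneg fun i _ => sq_nonneg _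
  rcases hB.eq_or_lt with hB₀ | hB₀
  · rw [← hB₀, mul_zero]
    exact mul_nonneg (by positivity) (sum_nonneg fun i _ => sum_nonneg fun j _ =>
      sum_nonneg fun k _ => sq_nonneg _)
  · refine le_of_mul_le_mul_right ?_ (by positivity : 0 < 3 * ∑ i, trace T i ^ 2)
    linarith

end Tensor3

open Finset in
theorem stmt4_general (n : ℕ) (T : Fin n → Fin n → Fin n → ℝ)
    (hsym : ∀ i j k, T i j k = T j i k ∧ T i j k = T i k j) :
    (∑ i, ∑ j, ∑ k, (T i j k) ^ 2)
      ≥ (3 / ((n : ℝ) + 2)) * ∑ i, (∑ j, T i j j) ^ 2 := by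
  have h := Tensor3.IsTotallySymmetric.sum_trace_sq_le hsym
  rw [Fintype.card_fin] at h
  rw [ge_iff_le, div_mul_eq_mul_div, div_le_iff₀ (by positivity)]
  simpa only [Tensor3.trace, mul_comm] using h

open Finset in
/-- Kato-type inequality for totally symmetric 3-tensors on `ℝⁿ`:
`|T|² ≥ (3/(n+2)) |tr T|²`. -/
theorem stmt4 (n : ℕ) (hn : 2 ≤ n) (T : Fin n → Fin n → Fin n → ℝ)
    (hsym : ∀ i j k, T i j k = T j i k ∧ T i j k = T i k j) :
    (∑ i, ∑ j, ∑ k, (T i j k) ^ 2)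
      ≥ (3 / ((n : ℝ) + 2)) * ∑ i, (∑ j, T i j j) ^ 2 :=
  stmt4_general n T hsym
end

section
/- Let n ≥ 3 be an integer, m ≥ 1 an integer with m ≤ n, α ∈ (0,1), and η ∈ (0, 1/(n-m+α) - 1/(n-m+1)). Set η₀ to be any real with η₀ ≥ η, and define for λ ∈ ℝⁿ: tr(λ) = Σᵢλᵢ, |λ|² = Σᵢλᵢ², W(λ) = (1/(n-m+α) - 1/(n-m+1) + η₀ - η)·tr(λ)² + 2(m-α), and |C(λ)|² = Σ_{i,j} (λⱼ - λᵢ)²(λᵢλⱼ + 1)². Then there exists γ > 0, depending only on n, m, α, η, η₀, such that for every λ ∈ ℝⁿ satisfying |λ|² - tr(λ)²/(n-m+1) - η·tr(λ)² ≥ 0 and |λ|² - tr(λ)²/(n-m+α) - 2(m-α) ≤ 0, one has γ·W(λ)³ ≤ |C(λ)|² + 1. -/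
/-!
Write `t = ∑ λᵢ`. While `t²` stays bounded, so does `W(λ)`, and `|C(λ)|² + 1 ≥ 1` suffices.
For large `t²`, normalise `μ = λ / t`: the pinching conditions put `μ` in the compact set
`∑ μ = 1, (N + 1)⁻¹ + η ≤ |μ|² ≤ (N + α/2)⁻¹` with `N = n - m`. The degree-six part
`L(μ) = ∑ (μᵢ μⱼ (μᵢ - μⱼ))²` of `|C|²` vanishes only if all nonzero `μᵢ` agree, which forces
`|μ|² = 1/k` for an integer `k`, and no such value lies in that set. Hence `L ≥ c > 0` there, so
`|C(λ)|² ≥ c t⁶ / 2 - O(t²)`, while `W(λ) = O(t²)`.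
-/

open Finset

theorem inv_add_lt_inv_of_inv_succ_lt {N k : ℕ} {β : ℝ} (hβ : 0 < β)
    (h : ((N : ℝ) + 1)⁻¹ < (k : ℝ)⁻¹) : ((N : ℝ) + β)⁻¹ < (k : ℝ)⁻¹ := by
  have hk : (0 : ℝ) < k := inv_pos.mp ((inv_pos.mpr (by positivity)).trans h)
  have hkN : (k : ℝ) ≤ N := by
    exact_mod_cast Nat.lt_succ_iff.mp (by exact_mod_cast (inv_lt_inv₀ (by positivity) hk).mp h)
  exact (inv_lt_inv₀ (by positivity) hk).mpr (by linarith)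

section LeadingSimons

variable {ι : Type*} [Fintype ι]

noncomputable def leadingSimons (μ : ι → ℝ) : ℝ :=
  ∑ i, ∑ j, (μ i * μ j * (μ i - μ j)) ^ 2

theorem leadingSimons_nonneg (μ : ι → ℝ) : 0 ≤ leadingSimons μ :=
  sum_nonneg fun _ _ => sum_nonneg fun _ _ => sq_nonneg _

theorem continuous_leadingSimons : Continuous (leadingSimons : (ι → ℝ) → ℝ) := by
  unfold leadingSimons
  fun_prop

theorem leadingSimons_smul (t : ℝ) (μ : ι → ℝ) :
    leadingSimons (t • μ) = t ^ 6 * leadingSimons μ := by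
  simp only [leadingSimons, Pi.smul_apply, smul_eq_mul, mul_sum]
  exact sum_congr rfl fun _ _ => sum_congr rfl fun _ _ => by ring

theorem leadingSimons_eq_zero_iff {μ : ι → ℝ} :
    leadingSimons μ = 0 ↔ ∀ i j, μ i * μ j * (μ i - μ j) = 0 := by
  simp_rw [leadingSimons, sum_eq_zero_iff_of_nonneg fun _ _ => sum_nonneg fun _ _ => sq_nonneg _,
    sum_eq_zero_iff_of_nonneg fun _ _ => sq_nonneg _, mem_univ, true_implies, sq_eq_zero_iff]

/-- Summing `μᵢ μⱼ (μᵢ - μⱼ) = 0` over `j` gives `μᵢ (μᵢ - ∑ μ ^ 2) = 0`, so every nonzero entry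
equals `∑ μ ^ 2`; `k` counts them. -/
theorem exists_sum_sq_eq_inv_of_leadingSimons_eq_zero {μ : ι → ℝ} (hsum : ∑ i, μ i = 1)
    (h : leadingSimons μ = 0) : ∃ k : ℕ, ∑ i, μ i ^ 2 = (k : ℝ)⁻¹ := by
  set S := ∑ i, μ i ^ 2
  have hμ : ∀ i, μ i ≠ 0 → μ i = S := by
    intro i hi
    have : μ i * (μ i - S) = 0 := by
      calc μ i * (μ i - S) = μ i ^ 2 * ∑ j, μ j - μ i * ∑ j, μ j ^ 2 := by rw [hsum]; ring
        _ = ∑ j, μ i * μ j * (μ i - μ j) := by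
            rw [mul_sum, mul_sum, ← sum_sub_distrib]
            exact sum_congr rfl fun _ _ => by ring
        _ = 0 := sum_eq_zero fun j _ => leadingSimons_eq_zero_iff.mp h i j
    simpa [hi, sub_eq_zero] using this
  refine ⟨#{i | μ i ≠ 0}, eq_inv_of_mul_eq_one_right ?_⟩
  rw [← hsum, ← sum_filter_ne_zero, sum_congr rfl fun i hi => hμ i (mem_filter.mp hi).2,
    sum_const, nsmul_eq_mul]

theorem leadingSimons_pos {N : ℕ} {β : ℝ} (hβ : 0 < β) {μ : ι → ℝ} (hsum : ∑ i, μ i = 1)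
    (hlo : ((N : ℝ) + 1)⁻¹ < ∑ i, μ i ^ 2) (hhi : ∑ i, μ i ^ 2 ≤ ((N : ℝ) + β)⁻¹) :
    0 < leadingSimons μ := by
  refine (leadingSimons_nonneg μ).lt_of_ne' fun h => ?_
  obtain ⟨k, hk⟩ := exists_sum_sq_eq_inv_of_leadingSimons_eq_zero hsum h
  rw [hk] at hlo hhi
  exact (inv_add_lt_inv_of_inv_succ_lt hβ hlo).not_ge hhi

theorem isCompact_setOf_sum_sq_le (r : ℝ) : IsCompact {μ : ι → ℝ | ∑ i, μ i ^ 2 ≤ r} := by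
  refine (isCompact_closedBall (0 : ι → ℝ) √r).of_isClosed_subset
    (isClosed_le (by fun_prop) continuous_const) fun μ hμ => ?_
  rw [mem_closedBall_zero_iff, pi_norm_le_iff_of_nonneg (Real.sqrt_nonneg r)]
  exact fun i =>
    Real.abs_le_sqrt ((single_le_sum (fun j _ => sq_nonneg (μ j)) (mem_univ i)).trans hμ)

theorem exists_pos_le_leadingSimons (N : ℕ) {β η : ℝ} (hβ : 0 < β) (hη : 0 < η) :
    ∃ c > 0, ∀ μ : ι → ℝ, ∑ i, μ i = 1 → ((N : ℝ) + 1)⁻¹ + η ≤ ∑ i, μ i ^ 2 →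
      ∑ i, μ i ^ 2 ≤ ((N : ℝ) + β)⁻¹ → c ≤ leadingSimons μ := by
  have hK : IsCompact ({μ : ι → ℝ | ∑ i, μ i ^ 2 ≤ ((N : ℝ) + β)⁻¹} ∩
      {μ | ∑ i, μ i = 1 ∧ ((N : ℝ) + 1)⁻¹ + η ≤ ∑ i, μ i ^ 2}) :=
    (isCompact_setOf_sum_sq_le _).inter_right
      ((isClosed_eq (by fun_prop) continuous_const).inter
        (isClosed_le continuous_const (by fun_prop : Continuous fun μ : ι → ℝ => ∑ i, μ i ^ 2)))
  obtain ⟨c, hc, hcK⟩ := hK.exists_forall_le' continuous_leadingSimons.continuousOn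
    fun μ ⟨hhi, hsum, hlo⟩ => leadingSimons_pos hβ hsum (by linarith) hhi
  exact ⟨c, hc, fun μ hsum hlo hhi => hcK μ ⟨hhi, hsum, hlo⟩⟩

theorem exists_pos_mul_cube_le_leadingSimons (N : ℕ) {α η : ℝ} (hα : 0 < α) (hη : 0 < η)
    (K : ℝ) : ∃ c > 0, ∃ R, ∀ lam : ι → ℝ,
      (∑ i, lam i) ^ 2 / ((N : ℝ) + 1) + η * (∑ i, lam i) ^ 2 ≤ ∑ i, lam i ^ 2 →
      ∑ i, lam i ^ 2 ≤ (∑ i, lam i) ^ 2 / ((N : ℝ) + α) + K →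
      R ≤ (∑ i, lam i) ^ 2 → c * ((∑ i, lam i) ^ 2) ^ 3 ≤ leadingSimons lam := by
  obtain ⟨c, hc, hcμ⟩ := exists_pos_le_leadingSimons (ι := ι) N (half_pos hα) hη
  have hgap : 0 < ((N : ℝ) + α / 2)⁻¹ - ((N : ℝ) + α)⁻¹ :=
    sub_pos.mpr (inv_strictAnti₀ (by positivity) (by linarith))
  refine ⟨c, hc, max 1 (K / (((N : ℝ) + α / 2)⁻¹ - ((N : ℝ) + α)⁻¹)), fun lam hlo hhi hR => ?_⟩
  set t := ∑ i, lam i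
  have ht : 0 < t ^ 2 := one_pos.trans_le ((le_max_left _ _).trans hR)
  have hK : K ≤ (((N : ℝ) + α / 2)⁻¹ - ((N : ℝ) + α)⁻¹) * t ^ 2 :=
    (div_le_iff₀' hgap).mp ((le_max_right _ _).trans hR)
  have ht0 : t ≠ 0 := fun h => by simp [h] at ht
  set μ := t⁻¹ • lam
  have hsum : ∑ i, μ i = 1 := by simp [μ, ← mul_sum, t, ht0]
  have hsq : ∑ i, μ i ^ 2 = (∑ i, lam i ^ 2) / t ^ 2 := by
    simp [μ, mul_pow, ← mul_sum, div_eq_inv_mul]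
  rw [div_eq_mul_inv] at hlo hhi
  have hμ := hcμ μ hsum (by rw [hsq, le_div_iff₀ ht]; linarith)
    (by rw [hsq, div_le_iff₀ ht]; linarith)
  calc c * (t ^ 2) ^ 3 = t ^ 6 * c := by ring
    _ ≤ t ^ 6 * leadingSimons μ := by gcongr
    _ = leadingSimons lam := by rw [← leadingSimons_smul, smul_smul, mul_inv_cancel₀ ht0, one_smul]

/-- Expanding `(ab + 1)²`, the right side is `X² + (2ab + 1)(a - b)²` with `X = ab(a - b)`, and
AM-GM gives `2ab(a - b)² = 2X(a - b) ≥ -X²/2 - 2(a - b)²`. -/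
theorem half_leadingSimons_sub_le (μ : ι → ℝ) :
    leadingSimons μ / 2 - 4 * Fintype.card ι * ∑ i, μ i ^ 2 ≤
      ∑ i, ∑ j, (μ j - μ i) ^ 2 * (μ i * μ j + 1) ^ 2 := by
  have hterm (a b : ℝ) :
      (a * b * (a - b)) ^ 2 / 2 - (2 * a ^ 2 + 2 * b ^ 2) ≤ (b - a) ^ 2 * (a * b + 1) ^ 2 := by
    nlinarith [sq_nonneg ((a - b) * (a * b + 2)), sq_nonneg (a + b)]
  have hsum : ∑ i, ∑ j, (2 * μ i ^ 2 + 2 * μ j ^ 2) = 4 * Fintype.card ι * ∑ i, μ i ^ 2 := by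
    simp only [sum_add_distrib, sum_const, card_univ, nsmul_eq_mul, ← mul_sum]
    ring
  calc leadingSimons μ / 2 - 4 * Fintype.card ι * ∑ i, μ i ^ 2
      = ∑ i, ∑ j, ((μ i * μ j * (μ i - μ j)) ^ 2 / 2 - (2 * μ i ^ 2 + 2 * μ j ^ 2)) := by
        simp only [leadingSimons, ← hsum, sum_div, ← sum_sub_distrib]
    _ ≤ _ := sum_le_sum fun i _ => sum_le_sum fun j _ => hterm (μ i) (μ j)

end LeadingSimons

theorem exists_pos_mul_max_one_cube_le {c : ℝ} (hc : 0 < c) (B B' R : ℝ) :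
    ∃ κ > 0, ∀ s C : ℝ, 0 ≤ C → (R ≤ s → c * s ^ 3 - (B * s + B') ≤ C) →
      κ * max s 1 ^ 3 ≤ C + 1 := by
  set T := max (max R 1) (2 * (|B| + |B'|) / c)
  have hT1 : 1 ≤ T := (le_max_right R 1).trans (le_max_left _ _)
  refine ⟨min (T ^ 3)⁻¹ (c / 2), by positivity, fun s C hC hsC => ?_⟩
  rcases le_or_gt s T with hs | hs
  · calc min (T ^ 3)⁻¹ (c / 2) * max s 1 ^ 3 ≤ (T ^ 3)⁻¹ * T ^ 3 := by
          gcongr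
          · exact min_le_left _ _
          · exact max_le hs hT1
      _ = 1 := inv_mul_cancel₀ (by positivity)
      _ ≤ C + 1 := by linarith
  · have hs1 : 1 ≤ s := hT1.trans hs.le
    have hsB : 2 * (|B| + |B'|) ≤ c * s := (div_le_iff₀' hc).mp ((le_max_right _ _).trans hs.le)
    have hlow : B * s + B' ≤ c / 2 * s ^ 3 :=
      calc B * s + B' ≤ |B| * s + |B'| :=
            add_le_add (mul_le_mul_of_nonneg_right (le_abs_self B) (by linarith)) (le_abs_self B')
        _ ≤ (|B| + |B'|) * s ^ 2 := by
          nlinarith [mul_nonneg (abs_nonneg B) (by nlinarith : (0 : ℝ) ≤ s ^ 2 - s),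
            mul_nonneg (abs_nonneg B') (by nlinarith : (0 : ℝ) ≤ s ^ 2 - 1)]
        _ ≤ c / 2 * s ^ 3 := by nlinarith [mul_le_mul_of_nonneg_left hsB (sq_nonneg s)]
    calc min (T ^ 3)⁻¹ (c / 2) * max s 1 ^ 3 ≤ c / 2 * s ^ 3 := by
          rw [max_eq_left hs1]
          gcongr
          exact min_le_right _ _
      _ ≤ c * s ^ 3 - (B * s + B') := by linarith
      _ ≤ C + 1 := by linarith [hsC ((le_max_left R 1).trans (le_max_left _ _) |>.trans hs.le)]

theorem affine_le_mul_max_one {s : ℝ} (hs : 0 ≤ s) (p q : ℝ) :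
    p * s + q ≤ (|p| + |q| + 1) * max s 1 := by
  nlinarith [le_max_left s 1, le_max_right s 1, le_abs_self p, le_abs_self q, abs_nonneg p,
    abs_nonneg q]

theorem exists_pos_mul_affine_cube_le (p q : ℝ) {c : ℝ} (hc : 0 < c) (B B' R : ℝ) :
    ∃ γ > 0, ∀ s C : ℝ, 0 ≤ s → 0 ≤ C → (R ≤ s → c * s ^ 3 - (B * s + B') ≤ C) →
      γ * (p * s + q) ^ 3 ≤ C + 1 := by
  obtain ⟨κ, hκ, hκC⟩ := exists_pos_mul_max_one_cube_le hc B B' R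
  refine ⟨κ / (|p| + |q| + 1) ^ 3, by positivity, fun s C hs hC hsC => ?_⟩
  calc κ / (|p| + |q| + 1) ^ 3 * (p * s + q) ^ 3
      ≤ κ / (|p| + |q| + 1) ^ 3 * ((|p| + |q| + 1) * max s 1) ^ 3 :=
        mul_le_mul_of_nonneg_left
          ((Odd.pow_le_pow (by decide)).mpr (affine_le_mul_max_one hs p q)) (by positivity)
    _ = κ * max s 1 ^ 3 := by field_simp
    _ ≤ C + 1 := hκC s C hC hsC

open Finset in
theorem stmt7_general (n m : ℕ) (α η η₀ : ℝ) (hmn : m ≤ n)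
    (hα0 : 0 < α)
    (hη0 : 0 < η) :
    ∃ γ : ℝ, 0 < γ ∧ ∀ lam : Fin n → ℝ,
      (∑ i, (lam i) ^ 2) - (∑ i, lam i) ^ 2 / ((n : ℝ) - m + 1)
          - η * (∑ i, lam i) ^ 2 ≥ 0 →
      (∑ i, (lam i) ^ 2) - (∑ i, lam i) ^ 2 / ((n : ℝ) - m + α)
          - 2 * ((m : ℝ) - α) ≤ 0 →
      γ * ((1 / ((n : ℝ) - m + α) - 1 / ((n : ℝ) - m + 1) + η₀ - η)
              * (∑ i, lam i) ^ 2 + 2 * ((m : ℝ) - α)) ^ 3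
        ≤ (∑ i, ∑ j, (lam j - lam i) ^ 2 * (lam i * lam j + 1) ^ 2) + 1 := by
  obtain ⟨c, hc, R, hcL⟩ :=
    exists_pos_mul_cube_le_leadingSimons (ι := Fin n) (n - m) hα0 hη0 (2 * ((m : ℝ) - α))
  rw [Nat.cast_sub hmn] at hcL
  obtain ⟨γ, hγ, hγC⟩ := exists_pos_mul_affine_cube_le
    (1 / ((n : ℝ) - m + α) - 1 / ((n : ℝ) - m + 1) + η₀ - η) (2 * ((m : ℝ) - α)) (half_pos hc)
    (4 * n * ((n : ℝ) - m + α)⁻¹) (4 * n * (2 * ((m : ℝ) - α))) R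
  refine ⟨γ, hγ, fun lam hlo hhi => hγC _ _ (sq_nonneg _)
    (sum_nonneg fun _ _ => sum_nonneg fun _ _ => by positivity) fun hR => ?_⟩
  have hL := hcL lam (by linarith) (by linarith) hR
  have hC := half_leadingSimons_sub_le lam
  rw [Fintype.card_fin] at hC
  have hS := mul_le_mul_of_nonneg_left
    (show ∑ i, lam i ^ 2 ≤ (∑ i, lam i) ^ 2 / ((n : ℝ) - m + α) + 2 * ((m : ℝ) - α) by linarith)
    (by positivity : (0 : ℝ) ≤ 4 * n)
  rw [div_eq_mul_inv] at hS
  linarith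

open Finset in
/-- The key pointwise algebraic inequality in the Poincaré-type estimate:
`γ W(λ)³ ≤ |C(λ)|² + 1` for pinched `λ`. -/
theorem stmt7 (n m : ℕ) (α η η₀ : ℝ) (hn : 3 ≤ n) (hm : 1 ≤ m) (hmn : m ≤ n)
    (hα0 : 0 < α) (hα1 : α < 1)
    (hη0 : 0 < η)
    (hη1 : η < 1 / ((n : ℝ) - m + α) - 1 / ((n : ℝ) - m + 1))
    (hηη₀ : η ≤ η₀) :
    ∃ γ : ℝ, 0 < γ ∧ ∀ lam : Fin n → ℝ,
      (∑ i, (lam i) ^ 2) - (∑ i, lam i) ^ 2 / ((n : ℝ) - m + 1)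
          - η * (∑ i, lam i) ^ 2 ≥ 0 →
      (∑ i, (lam i) ^ 2) - (∑ i, lam i) ^ 2 / ((n : ℝ) - m + α)
          - 2 * ((m : ℝ) - α) ≤ 0 →
      γ * ((1 / ((n : ℝ) - m + α) - 1 / ((n : ℝ) - m + 1) + η₀ - η)
              * (∑ i, lam i) ^ 2 + 2 * ((m : ℝ) - α)) ^ 3
        ≤ (∑ i, ∑ j, (lam j - lam i) ^ 2 * (lam i * lam j + 1) ^ 2) + 1 :=
  stmt7_general n m α η η₀ hmn hα0 hη0
end

section
/- Let n ≥ 2, m ≥ 1, α ∈ (0,1), η₀ > 0, η ∈ (0, η₀), and K > 0. Define a = 1/(n-m+α) - 1/(n-m+1) + η₀ - η, b = 2(m-α), and suppose a > 0. For real numbers |A|², H² ≥ 0 with H² ≤ n|A|², set W = aH² + bK and f = |A|² - (1/(n-m+1) + η)H². Suppose f ≤ W, |A|² ≤ H²/(n-m+α) + 2(m-α)K, and n·η₀ ≤ n/2 + α - m. Then Z := (m-α)(|A|² + nK)·f/W + H² - n|A|² satisfies Z ≤ -n·η₀·f whenever f ≥ 0. -/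
/-- The reaction-term estimate `Z ≤ -nη₀ f` at the heart of the evolution
inequality for the pinching quantity `f_{σ,η}`. -/
theorem stmt17 (n m : ℕ) (α η η₀ K a b A2 H2 W f : ℝ)
    (hn : 2 ≤ n) (hm : 1 ≤ m) (hα0 : 0 < α) (hα1 : α < 1)
    (hη₀ : 0 < η₀) (hη : 0 < η) (hηη₀ : η < η₀) (hK : 0 < K)
    (ha : a = 1 / ((n : ℝ) - m + α) - 1 / ((n : ℝ) - m + 1) + η₀ - η)
    (hapos : 0 < a)
    (hb : b = 2 * ((m : ℝ) - α))
    (hA2 : 0 ≤ A2) (hH2 : 0 ≤ H2) (hCS : H2 ≤ n * A2)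
    (hW : W = a * H2 + b * K)
    (hf : f = A2 - (1 / ((n : ℝ) - m + 1) + η) * H2)
    (hfW : f ≤ W)
    (hpin : A2 ≤ H2 / ((n : ℝ) - m + α) + 2 * ((m : ℝ) - α) * K)
    (hη₀' : (n : ℝ) * η₀ ≤ (n : ℝ) / 2 + α - m)
    (hfpos : 0 ≤ f) :
    ((m : ℝ) - α) * (A2 + n * K) * f / W + H2 - n * A2 ≤ -((n : ℝ) * η₀) * f := by
  have hn2 : (2:ℝ) ≤ (n:ℝ) := by exact_mod_cast hn
  have hm1 : (1:ℝ) ≤ (m:ℝ) := by exact_mod_cast hm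
  have hmα : 0 < (m:ℝ) - α := by linarith
  have hη₀half : η₀ < 1/2 := by
    have h1 : (n:ℝ) * η₀ < (n:ℝ) * (1/2) := by linarith
    exact lt_of_mul_lt_mul_left h1 (by linarith)
  have hnη₀ : 0 < (n:ℝ) * η₀ := mul_pos (by linarith) hη₀
  have hP : 0 < (n:ℝ) - m + α := by linarith
  have hQ : 0 < (n:ℝ) - m + 1 := by linarith
  set P : ℝ := (n:ℝ) - m + α with hPdef
  set Q : ℝ := (n:ℝ) - m + 1 with hQdef
  set c : ℝ := 1 / P with hc
  set d : ℝ := 1 / Q with hd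
  have hcP : c * P = 1 := by rw [hc, one_div, inv_mul_cancel₀ hP.ne']
  have hdQ : d * Q = 1 := by rw [hd, one_div, inv_mul_cancel₀ hQ.ne']
  have hcpos : 0 < c := one_div_pos.mpr hP
  have hdpos : 0 < d := one_div_pos.mpr hQ
  have hbpos : 0 < b := by rw [hb]; linarith
  have hW0 : 0 < W := by
    rw [hW]
    have h1 : 0 ≤ a * H2 := mul_nonneg hapos.le hH2
    have h2 : 0 < b * K := mul_pos hbpos hK
    linarith
  -- a ≤ 1
  have ha1 : a ≤ 1 := by
    have h2η : 2 * η₀ ≤ (n:ℝ) * η₀ := mul_le_mul_of_nonneg_right hn2 hη₀.le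
    have hP' : (1:ℝ) + 2 * η₀ ≤ P := by rw [hPdef]; linarith
    have hq1 : 0 ≤ η₀ * (1 - 2*η₀) := mul_nonneg hη₀.le (by linarith)
    have hq2 : (1 - η₀) * (1 + 2*η₀) ≤ (1 - η₀) * P :=
      mul_le_mul_of_nonneg_left hP' (by linarith)
    have h1 : 1 ≤ (1 - η₀) * P := by nlinarith only [hq1, hq2]
    have h2 : c ≤ 1 - η₀ := by rw [hc, div_le_iff₀ hP]; linarith
    rw [ha]; linarith [hdpos]
  -- coefficient inequalities
  have hmc : ((m:ℝ) - α) * c = (n:ℝ) * c - 1 := by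
    have h : ((m:ℝ) - α) * c = (n:ℝ) * c - c * P := by rw [hPdef]; ring
    rw [h, hcP]
  have hcoef1 : ((m:ℝ) - α) * c ≤ (n:ℝ) * (1 - η₀) * a + (n:ℝ) * d + (n:ℝ) * η - 1 := by
    have hadiff : c - d - η = a - η₀ := by rw [ha]; ring
    have h1 : η₀ * (a - 1) ≤ 0 :=
      mul_nonpos_of_nonneg_of_nonpos hη₀.le (by linarith)
    have h2 : (n:ℝ) * (η₀ * (a - 1)) ≤ 0 :=
      mul_nonpos_of_nonneg_of_nonpos (by linarith) h1
    rw [hmc]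
    nlinarith only [h2, hadiff]
  have hcoef2 : ((m:ℝ) - α) * (b + n) ≤ (n:ℝ) * (1 - η₀) * b := by
    have h1 : 0 ≤ ((m:ℝ) - α) * ((n:ℝ) - 2*((m:ℝ) - α) - 2*((n:ℝ)*η₀)) :=
      mul_nonneg hmα.le (by linarith)
    rw [hb]
    nlinarith only [h1]
  have hd1 : 1 ≤ (n:ℝ) * d := by
    have hQn : Q ≤ (n:ℝ) := by rw [hQdef]; linarith
    have h1 : 0 ≤ ((n:ℝ) - Q) * d := mul_nonneg (by linarith) hdpos.le
    nlinarith only [h1, hdQ]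
  -- the key polynomial inequality
  have hpin' : A2 + (n:ℝ) * K ≤ c * H2 + (b + n) * K := by
    have h1 : H2 / P = c * H2 := by rw [hc]; ring
    rw [hb]
    nlinarith only [hpin, h1]
  have s1 : ((m:ℝ) - α) * (A2 + n * K) * f ≤
      ((m:ℝ) - α) * c * (H2 * f) + ((m:ℝ) - α) * (b + n) * (K * f) := by
    nlinarith only [mul_le_mul_of_nonneg_left hpin' (mul_nonneg hmα.le hfpos)]
  have s2 : ((m:ℝ) - α) * c * (H2 * f) ≤
      ((n:ℝ) * (1 - η₀) * a + (n:ℝ) * d + (n:ℝ) * η - 1) * (H2 * f) :=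
    mul_le_mul_of_nonneg_right hcoef1 (mul_nonneg hH2 hfpos)
  have s3 : ((m:ℝ) - α) * (b + n) * (K * f) ≤ (n:ℝ) * (1 - η₀) * b * (K * f) :=
    mul_le_mul_of_nonneg_right hcoef2 (mul_nonneg hK.le hfpos)
  have s4 : ((n:ℝ) * d + (n:ℝ) * η - 1) * (H2 * f) ≤
      ((n:ℝ) * d + (n:ℝ) * η - 1) * (H2 * W) := by
    have hcoef : 0 ≤ (n:ℝ) * d + (n:ℝ) * η - 1 := by
      have := mul_nonneg (by linarith : (0:ℝ) ≤ (n:ℝ)) hη.le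
      linarith
    exact mul_le_mul_of_nonneg_left (mul_le_mul_of_nonneg_left hfW hH2) hcoef
  have hRHS : ((n:ℝ) * A2 - H2 - (n:ℝ) * η₀ * f) * W
      = (n:ℝ) * (1 - η₀) * a * (H2 * f) + (n:ℝ) * (1 - η₀) * b * (K * f)
        + ((n:ℝ) * d + (n:ℝ) * η - 1) * (H2 * W) := by
    rw [hf, hW]; ring
  have key : ((m:ℝ) - α) * (A2 + n * K) * f ≤ ((n:ℝ) * A2 - H2 - (n:ℝ) * η₀ * f) * W := by
    rw [hRHS]
    have e1 : (n:ℝ) * (1 - η₀) * a * (H2 * f)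
        = ((n:ℝ) * (1 - η₀) * a + (n:ℝ) * d + (n:ℝ) * η - 1) * (H2 * f)
          - ((n:ℝ) * d + (n:ℝ) * η - 1) * (H2 * f) := by ring
    linarith [s1, s2, s3, s4]
  have hdiv : ((m:ℝ) - α) * (A2 + n * K) * f / W ≤ (n:ℝ) * A2 - H2 - (n:ℝ) * η₀ * f :=
    (div_le_iff₀ hW0).mpr key
  linarith [hdiv]
end
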